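/- arXiv:1003.2080 — 6 statements merged into one kernel-verified Lean document; each statement's English description precedes it below -/
import Mathlib

section
/- Let q = 2^h and let α, β, λ, α', β', λ' ∈ GF(q) with λ ≠ 0, λ' ≠ 0, λ ≠ λ', Tr(αβ) = 1, Tr(α'β') = 1, and Tr((α⊕α')(β⊕β')) = 1. Then the three conics F_{α,β,λ}, F_{α',β',λ'} and F_{α⊕α', β⊕β', λ+λ'} are pairwise disjoint subsets of PG(2,q). -/
/-!
Take `λ ≠ λ'` in characteristic 2. Adding `λ'` times the equation of `F_{a,b,λ}` to `λ` times that
of `F_{a',b',λ'}` eliminates `z`, so a common point `(x,y,z)` gives a zero `(x,y) ≠ (0,0)` of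
`A x² + x y + B y²` with `A = (aλ' + a'λ)/(λ + λ')`, `B = (bλ' + b'λ)/(λ + λ')`. Such a zero
forces `Tr(AB) = 0`, since `t = Ax/y` solves `t² + t = AB` (or `A = 0` when `y = 0`).
In characteristic 2, `AB = ab + a'b' + (a⊕a')(b⊕b')`, and this expression is the same for all
three pairs of conics in the theorem, because composing any two of the three triples
`(a, b, λ)` with `⊕` gives the third; its trace is `1 + 1 + 1 = 1`.
-/

open scoped Classical

noncomputable section

namespace MaxArc

variable (F : Type) [Field F] [Fintype F]

/-- The absolute trace map of `GF(2^h)` over `GF(2)`, valued in the field itself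
(the prime subfield is identified with `{0,1}`). -/
def tr (h : ℕ) (x : F) : F := ∑ i ∈ Finset.range h, x ^ 2 ^ i

/-- The points of `PG(2,q)`. -/
abbrev Pt := Projectivization F (Fin 3 → F)

/-- The conic `F_{α,β,λ} = {(x,y,z) : α x² + x y + β y² + λ z² = 0}` of `PG(2,q)`.
(The defining equation is homogeneous, so evaluating at the chosen representative
is independent of the choice.) -/
def conicSet (a b l : F) : Set (Pt F) :=
  {P | a * P.rep 0 ^ 2 + P.rep 0 * P.rep 1 + b * P.rep 1 ^ 2 + l * P.rep 2 ^ 2 = 0}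

/-- The lines of `PG(2,q)`: zero sets of nonzero linear forms. -/
def IsLine (L : Set (Pt F)) : Prop :=
  ∃ u v w : F, ¬(u = 0 ∧ v = 0 ∧ w = 0) ∧
    L = {P | u * P.rep 0 + v * P.rep 1 + w * P.rep 2 = 0}

/-- A maximal arc of degree `d`: a nonempty proper set of points met by every line
in exactly `0` or `d` points. -/
def IsMaximalArc (K : Set (Pt F)) (d : ℕ) : Prop :=
  K.Nonempty ∧ K ≠ Set.univ ∧
    ∀ L : Set (Pt F), IsLine F L → (K ∩ L).ncard = 0 ∨ (K ∩ L).ncard = d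

/-- The point `(0,0,1)` of `PG(2,q)`. -/
def pt001 : Pt F := Projectivization.mk F ![0, 0, 1] (by
  intro hc
  have h2 := congrFun hc 2
  simp at h2)

/-- A collineation of `PG(2,q)`: the permutation of the point set induced by an
invertible `σ`-semilinear map of `F³` (written as an invertible matrix composed
with a field automorphism `σ`). -/
def IsCollineation (g : Pt F → Pt F) : Prop :=
  ∃ σ : F ≃+* F, ∃ M : Matrix (Fin 3) (Fin 3) F, IsUnit M.det ∧
    ∀ (v : Fin 3 → F) (hv : v ≠ 0) (hv' : M.mulVec (fun i => σ (v i)) ≠ 0),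
      g (Projectivization.mk F v hv) = Projectivization.mk F (M.mulVec (fun i => σ (v i))) hv'

/-- A closed set of conics `{F_{a(λ), b(λ), λ} : λ ∈ Λ}` in `PG(2,q)`, `q = 2^h`. -/
def IsClosedConicSet (h : ℕ) (Λ : Finset F) (a b : F → F) : Prop :=
  (0 : F) ∉ Λ ∧ (∀ l ∈ Λ, tr F h (a l * b l) = 1) ∧
    ∀ l ∈ Λ, ∀ l' ∈ Λ, l ≠ l' →
      l + l' ∈ Λ ∧ a (l + l') = (a l * l + a l' * l') / (l + l') ∧
        b (l + l') = (b l * l + b l' * l') / (l + l')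

/-- The point set of a (Mathon) arc obtained from a family of conics: the union of
the conics together with the common nucleus `(0,0,1)`. -/
def mathonSet (Λ : Finset F) (a b : F → F) : Set (Pt F) :=
  {pt001 F} ∪ ⋃ l ∈ Λ, conicSet F (a l) (b l) l

/-- The Denniston point set determined by `α` and a set `A ⊆ GF(q)`. -/
def dennistonSet (a : F) (A : Set F) : Set (Pt F) :=
  {pt001 F} ∪ ⋃ l ∈ A \ {0}, conicSet F a 1 l

/-- A degree 4 maximal arc of Denniston type: the image under a collineation of
`{(0,0,1)} ∪ ⋃_{λ ∈ A \ {0}} F_{α,1,λ}` with `Tr(α) = 1` and `A` an additive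
subgroup of order 4. -/
def IsDenniston4 (h : ℕ) (K : Set (Pt F)) : Prop :=
  ∃ a : F, tr F h a = 1 ∧ ∃ A : AddSubgroup F, Nat.card A = 4 ∧
    ∃ g : Pt F → Pt F, IsCollineation F g ∧ g '' dennistonSet F a (A : Set F) = K

/-- `C` is a nondegenerate conic of `PG(2,q)` with nucleus `n`: the zero set of a
nonzero quadratic form, consisting of exactly `q+1` points no three of which are
collinear, all of whose tangent lines pass through `n`. -/
def IsConicWithNucleus (C : Set (Pt F)) (n : Pt F) : Prop :=
  (∃ a b c d e f : F, ¬(a = 0 ∧ b = 0 ∧ c = 0 ∧ d = 0 ∧ e = 0 ∧ f = 0) ∧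
      C = {P | a * P.rep 0 ^ 2 + b * P.rep 1 ^ 2 + c * P.rep 2 ^ 2 +
        d * P.rep 0 * P.rep 1 + e * P.rep 0 * P.rep 2 + f * P.rep 1 * P.rep 2 = 0}) ∧
    C.ncard = Fintype.card F + 1 ∧
    (∀ L : Set (Pt F), IsLine F L → (C ∩ L).ncard ≤ 2) ∧
    (∀ L : Set (Pt F), IsLine F L → (C ∩ L).ncard = 1 → n ∈ L)

/-- A maximal arc of degree `d` of Mathon type in `PG(2,q)`, `q = 2^h`. -/
def IsMathonType (h : ℕ) (K : Set (Pt F)) (d : ℕ) : Prop :=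
  IsMaximalArc F K d ∧
    ∃ g : Pt F → Pt F, IsCollineation F g ∧ ∃ (Λ : Finset F) (a b : F → F),
      IsClosedConicSet F h Λ a b ∧ Λ.card + 1 = d ∧ g '' K = mathonSet F Λ a b

/-- A maximal arc of degree `d` of Mathon type in `PG(2,q)` with nucleus `n`
(the preimage of `(0,0,1)` under a collineation realizing the Mathon description). -/
def IsMathonWithNucleus (h : ℕ) (K : Set (Pt F)) (d : ℕ) (n : Pt F) : Prop :=
  IsMaximalArc F K d ∧
    ∃ g : Pt F → Pt F, IsCollineation F g ∧ g n = pt001 F ∧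
      ∃ (Λ : Finset F) (a b : F → F),
        IsClosedConicSet F h Λ a b ∧ Λ.card + 1 = d ∧ g '' K = mathonSet F Λ a b

/-- A maximal arc of Denniston type: Mathon type where the closed set of conics can
be chosen with `α` and `β` constant. -/
def IsDennistonType (h : ℕ) (K : Set (Pt F)) : Prop :=
  ∃ g : Pt F → Pt F, IsCollineation F g ∧ ∃ (a b : F) (Λ : Finset F),
    IsClosedConicSet F h Λ (fun _ => a) (fun _ => b) ∧
    g '' K = mathonSet F Λ (fun _ => a) (fun _ => b)

/-- A proper Mathon arc of degree `d`: a Mathon arc that is not of Denniston type. -/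
def IsProperMathon (h : ℕ) (K : Set (Pt F)) (d : ℕ) : Prop :=
  IsMathonType F h K d ∧ ¬ IsDennistonType F h K

end MaxArc

namespace MaxArc

variable {F : Type} [Field F]

/-- The paper's `α ⊕ α'` for the weights `λ, λ'`. -/
def oplus (l l' a a' : F) : F := (a * l + a' * l') / (l + l')

theorem oplus_comm (l l' a a' : F) : oplus l l' a a' = oplus l' l a' a := by
  rw [oplus, oplus, add_comm (a * l), add_comm l]

theorem tr_zero (h : ℕ) : tr F h 0 = 0 := by
  simp [tr]

theorem tr_sq [Fintype F] {h : ℕ} (hcard : Fintype.card F = 2 ^ h) (x : F) :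
    tr F h (x ^ 2) = tr F h x := by
  have hshift : tr F h (x ^ 2) + x ^ 2 ^ 0 = tr F h x + x ^ 2 ^ h := by
    simp only [tr, ← pow_mul, ← pow_succ']
    rw [← Finset.sum_range_succ, Finset.sum_range_succ']
  rwa [← hcard, FiniteField.pow_card, pow_zero, pow_one, add_left_inj] at hshift

section CharTwo

variable [CharP F 2]

theorem tr_add (h : ℕ) (x y : F) : tr F h (x + y) = tr F h x + tr F h y := by
  simp only [tr, add_pow_char_pow, Finset.sum_add_distrib]

theorem tr_sq_add_self [Fintype F] {h : ℕ} (hcard : Fintype.card F = 2 ^ h) (t : F) :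
    tr F h (t ^ 2 + t) = 0 := by
  rw [tr_add, tr_sq hcard, CharTwo.add_self_eq_zero]

theorem tr_mul_eq_zero_of_isotropic [Fintype F] {h : ℕ} (hcard : Fintype.card F = 2 ^ h)
    {A B x y : F} (hxy : x ≠ 0 ∨ y ≠ 0) (hform : A * x ^ 2 + x * y + B * y ^ 2 = 0) :
    tr F h (A * B) = 0 := by
  by_cases hy : y = 0
  · have hx : x ≠ 0 := hxy.resolve_right (not_not.mpr hy)
    have hA : A = 0 := by
      subst hy
      simpa [hx] using hform
    rw [hA, zero_mul, tr_zero]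
  · -- `t = A x / y` solves `t² + t = AB`
    have ht : (A * x / y) ^ 2 + A * x / y = A * B := by
      field_simp
      linear_combination A * hform - A * B * y ^ 2 * CharTwo.two_eq_zero (R := F)
    rw [← ht, tr_sq_add_self hcard]

theorem add_ne_zero_of_ne {l l' : F} (hll' : l ≠ l') : l + l' ≠ 0 := by
  rwa [Ne, CharTwo.add_eq_zero]

theorem oplus_form_eq_zero_of_conic_eqs {a b l a' b' l' x y z : F} (hll' : l ≠ l')
    (h₁ : a * x ^ 2 + x * y + b * y ^ 2 + l * z ^ 2 = 0)
    (h₂ : a' * x ^ 2 + x * y + b' * y ^ 2 + l' * z ^ 2 = 0) :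
    oplus l' l a a' * x ^ 2 + x * y + oplus l' l b b' * y ^ 2 = 0 := by
  have hsum : l' + l ≠ 0 := add_ne_zero_of_ne (Ne.symm hll')
  unfold oplus
  field_simp
  linear_combination l' * h₁ + l * h₂ - l * l' * z ^ 2 * CharTwo.two_eq_zero (R := F)

theorem oplus_mul_oplus_swap {a b a' b' l l' : F} (hll' : l ≠ l') :
    oplus l' l a a' * oplus l' l b b' = a * b + a' * b' + oplus l l' a a' * oplus l l' b b' := by
  have hsum : l + l' ≠ 0 := add_ne_zero_of_ne hll'
  have hsum' : l' + l ≠ 0 := add_ne_zero_of_ne (Ne.symm hll')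
  unfold oplus
  field_simp
  linear_combination -(l + l') ^ 3 * (a * b * l + a' * b' * l') * CharTwo.two_eq_zero (R := F)

theorem oplus_oplus_self_left {a a' l l' : F} (hl' : l' ≠ 0) (hll' : l ≠ l') :
    oplus l (l + l') a (oplus l l' a a') = a' := by
  unfold oplus
  rw [div_mul_cancel₀ _ (add_ne_zero_of_ne hll'), CharTwo.add_cancel_left,
    CharTwo.add_cancel_left, mul_div_cancel_right₀ _ hl']

theorem oplus_oplus_self_right {a a' l l' : F} (hl : l ≠ 0) (hll' : l ≠ l') :
    oplus l' (l + l') a' (oplus l l' a a') = a := by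
  rw [oplus_comm l l', add_comm l l']
  exact oplus_oplus_self_left hl hll'.symm

theorem disjoint_conicSet [Fintype F] {h : ℕ} (hcard : Fintype.card F = 2 ^ h)
    {a b l a' b' l' : F} (hll' : l ≠ l')
    (htr : tr F h (a * b + a' * b' + oplus l l' a a' * oplus l l' b b') = 1) :
    Disjoint (conicSet F a b l) (conicSet F a' b' l') := by
  rw [Set.disjoint_left]
  intro P h₁ h₂
  have hxy : P.rep 0 ≠ 0 ∨ P.rep 1 ≠ 0 := by
    by_contra! hxy
    obtain ⟨hx, hy⟩ := hxy
    have hz : P.rep 2 = 0 := by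
      have e₁ : l * P.rep 2 ^ 2 = 0 := by simpa [hx, hy] using h₁.out
      have e₂ : l' * P.rep 2 ^ 2 = 0 := by simpa [hx, hy] using h₂.out
      have e : (l + l') * P.rep 2 ^ 2 = 0 := by linear_combination e₁ + e₂
      simpa [add_ne_zero_of_ne hll'] using e
    exact P.rep_nonzero (funext fun i => by fin_cases i <;> assumption)
  have h0 := tr_mul_eq_zero_of_isotropic hcard hxy
    (oplus_form_eq_zero_of_conic_eqs hll' h₁ h₂)
  rw [oplus_mul_oplus_swap hll', htr] at h0
  exact one_ne_zero h0

end CharTwo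

end MaxArc

/-- Mathon's disjointness lemma: under the trace conditions, the two
conics and their composition are pairwise disjoint. -/
theorem statement0 {F : Type} [Field F] [Fintype F] (h : ℕ)
    (hcard : Fintype.card F = 2 ^ h)
    (α β l α' β' l' : F) (hl : l ≠ 0) (hl' : l' ≠ 0) (hll' : l ≠ l')
    (htr : MaxArc.tr F h (α * β) = 1) (htr' : MaxArc.tr F h (α' * β') = 1)
    (htr'' : MaxArc.tr F h
      (((α * l + α' * l') / (l + l')) * ((β * l + β' * l') / (l + l'))) = 1) :
    Disjoint (MaxArc.conicSet F α β l) (MaxArc.conicSet F α' β' l') ∧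
    Disjoint (MaxArc.conicSet F α β l)
      (MaxArc.conicSet F ((α * l + α' * l') / (l + l')) ((β * l + β' * l') / (l + l')) (l + l')) ∧
    Disjoint (MaxArc.conicSet F α' β' l')
      (MaxArc.conicSet F ((α * l + α' * l') / (l + l')) ((β * l + β' * l') / (l + l')) (l + l')) := by
  open MaxArc in
  have : CharP F 2 := charP_of_card_eq_prime_pow hcard
  have htr_sum : tr F h (α * β + α' * β' + oplus l l' α α' * oplus l l' β β') = 1 := by
    rw [tr_add, tr_add, htr, htr', oplus, oplus, htr'', CharTwo.add_self_eq_zero, zero_add]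
  refine ⟨disjoint_conicSet hcard hll' htr_sum,
    disjoint_conicSet (a' := oplus l l' α α') (b' := oplus l l' β β') hcard
      (add_ne_left.mpr hl').symm ?_,
    disjoint_conicSet (a' := oplus l l' α α') (b' := oplus l l' β β') hcard
      (add_ne_right.mpr hl).symm ?_⟩
  · rwa [oplus_oplus_self_left hl' hll', oplus_oplus_self_left hl' hll', add_right_comm]
  · rwa [oplus_oplus_self_right hl hll', oplus_oplus_self_right hl hll', ← add_rotate]
end
end

section
/- Let q = 2^h, let α ∈ GF(q) with Tr(α) = 1, and let A be an additive subgroup of GF(q) with |A| ≥ 2. Then {(0,0,1)} ∪ ⋃_{λ ∈ A\{0}} F_{α,1,λ} is a maximal arc of degree |A| in PG(2,q), i.e. every line of PG(2,q) meets this set in exactly 0 or |A| points. -/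
open scoped Classical

noncomputable section

/-!
Since `Tr (t² + t) = 0`, the hypothesis `Tr α = 1` says that `t² + t = α` has no root, so the form
`Q(x, y) = α x² + x y + y²` is anisotropic. Hence the arc lies in the affine plane `z ≠ 0`, where it
is `{Q ∈ A}`, the nucleus `(0,0,1)` being the point where `Q = 0`. On an affine line `Q` restricts
to `a t² + w t + c` with `a ≠ 0`, and `φ t = a t² + w t` is additive in characteristic two. If
`w = 0` (the line passes through the nucleus) `φ` is bijective and the line meets the arc in `|A|`
points. Otherwise `φ` is two-to-one onto a subgroup `H` of index two with `c ∉ H`; the parameters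
`t` with `φ t + c ∈ A` are either none or a coset of `φ⁻¹ A`, of size `2 |H ∩ A| = |A|` because
`A ⊄ H`.
-/

namespace AddSubgroup

variable {G G' : Type*} [AddCommGroup G] [AddCommGroup G']

theorem card_comap (φ : G →+ G') (A : AddSubgroup G') :
    Nat.card (A.comap φ) = Nat.card φ.ker * Nat.card (φ.range ⊓ A : AddSubgroup G') := by
  rw [← relIndex_bot_left, ← relIndex_mul_relIndex ⊥ φ.ker _ bot_le (φ.ker_le_comap A),
    relIndex_bot_left, relIndex_ker, map_comap_eq]

theorem two_mul_card_inf_of_index_eq_two {H A : AddSubgroup G} (hH : H.index = 2)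
    (hA : ¬A ≤ H) : 2 * Nat.card (H ⊓ A : AddSubgroup G) = Nat.card A := by
  have hrel : H.relIndex A = 2 := by
    have hdvd : H.relIndex A ∣ 2 := hH ▸ relIndex_dvd_index_of_normal H A
    rcases (Nat.dvd_prime Nat.prime_two).mp hdvd with h1 | h2
    · exact absurd (relIndex_eq_one.mp h1) hA
    · exact h2
  rw [← relIndex_bot_left, ← relIndex_bot_left,
    ← relIndex_mul_relIndex ⊥ (H ⊓ A) A bot_le inf_le_right, inf_relIndex_right, hrel, mul_comm]

theorem ncard_setOf_add_mem_eq_card_comap (φ : G →+ G') (A : AddSubgroup G') {c : G'} {t₀ : G}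
    (ht₀ : φ t₀ + c ∈ A) : {t | φ t + c ∈ A}.ncard = Nat.card (A.comap φ) := by
  have : {t | φ t + c ∈ A} = (t₀ + ·) '' (A.comap φ : Set G) := by
    ext t
    refine ⟨fun ht => ⟨t - t₀, ?_, add_sub_cancel t₀ t⟩, ?_⟩
    · simpa [map_sub] using A.sub_mem ht ht₀
    · rintro ⟨s, hs, rfl⟩
      simpa [add_assoc, add_left_comm] using A.add_mem hs ht₀
  rw [this, Set.ncard_image_of_injective _ (add_right_injective t₀), ← SetLike.coe_sort_coe,
    Nat.card_coe_set_eq]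

end AddSubgroup

namespace MaxArc

section CharTwo

variable {F : Type} [Field F]

theorem charP_two_of_card_eq_two_pow [Fintype F] {h : ℕ} (hcard : Fintype.card F = 2 ^ h) :
    CharP F 2 := by
  have h2 : (2 : F) ^ h = 0 := by exact_mod_cast hcard ▸ FiniteField.cast_card_eq_zero F
  exact CharTwo.of_one_ne_zero_of_two_eq_zero one_ne_zero (eq_zero_of_pow_eq_zero h2)

variable [CharP F 2]

theorem eq_zero_of_quadForm_eq_zero {α : F} (hα : ∀ t : F, t ^ 2 + t ≠ α) {x y : F}
    (hxy : α * x ^ 2 + x * y + y ^ 2 = 0) : x = 0 ∧ y = 0 := by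
  by_cases hx : x = 0
  · subst hx
    exact ⟨rfl, eq_zero_of_pow_eq_zero (n := 2) (by linear_combination hxy)⟩
  · refine absurd ?_ (hα (y / x))
    have h : x ^ 2 * ((y / x) ^ 2 + y / x + α) = 0 := by
      field_simp
      linear_combination hxy
    linear_combination (mul_eq_zero.mp h).resolve_left (pow_ne_zero 2 hx) -
      α * CharTwo.two_eq_zero (R := F)

def quadAddHom (a w : F) : F →+ F where
  toFun t := a * t ^ 2 + w * t
  map_zero' := by ring
  map_add' s t := by linear_combination (a * s * t) * CharTwo.two_eq_zero (R := F)

theorem quadAddHom_apply (a w t : F) : quadAddHom a w t = a * t ^ 2 + w * t := rfl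

theorem ker_quadAddHom_eq_bot {a : F} (ha : a ≠ 0) : (quadAddHom a 0).ker = ⊥ := by
  refine (AddMonoidHom.ker_eq_bot_iff _).mpr fun s t hst => ?_
  have h : a * (s + t) ^ 2 = 0 := by
    rw [quadAddHom_apply, quadAddHom_apply] at hst
    linear_combination hst + (a * t ^ 2 + a * s * t) * CharTwo.two_eq_zero (R := F)
  have : s + t = 0 := eq_zero_of_pow_eq_zero ((mul_eq_zero.mp h).resolve_left ha)
  linear_combination this - t * CharTwo.two_eq_zero (R := F)

theorem card_ker_quadAddHom {a w : F} (ha : a ≠ 0) (hw : w ≠ 0) :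
    Nat.card (quadAddHom a w).ker = 2 := by
  have hker : ((quadAddHom a w).ker : Set F) = {0, w / a} := by
    ext t
    simp only [SetLike.mem_coe, AddMonoidHom.mem_ker, quadAddHom_apply, Set.mem_insert_iff,
      Set.mem_singleton_iff]
    rw [eq_div_iff ha]
    constructor
    · intro h
      have : t * (a * t + w) = 0 := by linear_combination h
      refine (mul_eq_zero.mp this).imp id fun h' => ?_
      linear_combination h' - w * CharTwo.two_eq_zero (R := F)
    · rintro (rfl | h)
      · ring
      · linear_combination t * h + (w * t) * CharTwo.two_eq_zero (R := F)
  rw [← SetLike.coe_sort_coe, Nat.card_coe_set_eq, hker,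
    Set.ncard_pair (div_ne_zero hw ha).symm]

theorem ncard_setOf_quadratic_mem_eq_zero_or [Finite F] {a w c : F} (ha : a ≠ 0)
    (hc : w ≠ 0 → ∀ t, a * t ^ 2 + w * t + c ≠ 0) (A : AddSubgroup F) :
    {t | a * t ^ 2 + w * t + c ∈ A}.ncard = 0 ∨
      {t | a * t ^ 2 + w * t + c ∈ A}.ncard = Nat.card A := by
  set φ := quadAddHom a w
  change {t | φ t + c ∈ A}.ncard = 0 ∨ {t | φ t + c ∈ A}.ncard = Nat.card A
  rcases Set.eq_empty_or_nonempty {t | φ t + c ∈ A} with hS | ⟨t₀, ht₀⟩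
  · exact Or.inl (hS ▸ Set.ncard_empty F)
  right
  rw [AddSubgroup.ncard_setOf_add_mem_eq_card_comap φ A ht₀, AddSubgroup.card_comap]
  rcases eq_or_ne w 0 with rfl | hw
  · have hinj : Function.Injective φ :=
      (AddMonoidHom.ker_eq_bot_iff _).mp (ker_quadAddHom_eq_bot ha)
    rw [ker_quadAddHom_eq_bot ha,
      AddMonoidHom.range_eq_top.mpr (Finite.surjective_of_injective hinj), top_inf_eq,
      AddSubgroup.card_bot, one_mul]
  · have hrange : φ.range.index = 2 := by
      rw [AddSubgroup.index_range, card_ker_quadAddHom ha hw]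
    have hA : ¬A ≤ φ.range := by
      rintro hle
      obtain ⟨s, hs⟩ := hle ht₀
      refine hc hw (s - t₀) ?_
      rw [← quadAddHom_apply, map_sub]
      change φ s - φ t₀ + c = 0
      rw [hs, add_sub_cancel_left, CharTwo.add_self_eq_zero]
    rw [card_ker_quadAddHom ha hw, AddSubgroup.two_mul_card_inf_of_index_eq_two hrange hA]

end CharTwo

section AffineLine

variable {F : Type} [Field F] {u v w : F}

theorem injective_line_param (huv : ¬(u = 0 ∧ v = 0)) (x₀ y₀ : F) :
    Function.Injective fun t : F => (x₀ + t * v, y₀ - t * u) := by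
  intro s t hst
  simp only [Prod.mk.injEq, add_right_inj, sub_right_inj] at hst
  rcases not_and_or.mp huv with hu | hv
  · exact mul_right_cancel₀ hu hst.2
  · exact mul_right_cancel₀ hv hst.1

theorem setOf_line_eq_range (huv : ¬(u = 0 ∧ v = 0)) {x₀ y₀ : F}
    (h₀ : u * x₀ + v * y₀ + w = 0) :
    {p : F × F | u * p.1 + v * p.2 + w = 0} = Set.range fun t : F => (x₀ + t * v, y₀ - t * u) := by
  ext ⟨x, y⟩
  simp only [Set.mem_ofPred_eq, Set.mem_range, Prod.mk.injEq]
  constructor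
  · intro h
    rcases not_and_or.mp huv with hu | hv
    · refine ⟨(y₀ - y) / u, ?_, by field_simp; ring⟩
      field_simp
      linear_combination h₀ - h
    · refine ⟨(x - x₀) / v, by field_simp; ring, ?_⟩
      field_simp
      linear_combination h₀ - h
  · rintro ⟨t, rfl, rfl⟩
    linear_combination h₀

end AffineLine

section AffineChart

variable {F : Type} [Field F]

def affinePt (p : F × F) : Pt F :=
  Projectivization.mk F ![p.1, p.2, 1] fun h => by simpa using congrFun h 2

theorem affinePt_zero : affinePt (0 : F × F) = pt001 F := rfl

theorem exists_rep_affinePt (p : F × F) :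
    ∃ c : F, c ≠ 0 ∧ (affinePt p).rep 0 = c * p.1 ∧ (affinePt p).rep 1 = c * p.2 ∧
      (affinePt p).rep 2 = c := by
  obtain ⟨c, hc⟩ := Projectivization.exists_smul_eq_mk_rep F ![p.1, p.2, 1]
    fun h => by simpa using congrFun h 2
  refine ⟨c, c.ne_zero, ?_, ?_, ?_⟩ <;> simp [affinePt, ← hc, Units.smul_def]

theorem affinePt_injective : Function.Injective (affinePt (F := F)) := by
  intro p q hpq
  obtain ⟨c, hc⟩ := (Projectivization.mk_eq_mk_iff F _ _ _ _).mp hpq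
  have h := congrFun hc
  have hc1 : (c : F) = 1 := by simpa [Units.smul_def] using h 2
  simpa [Units.smul_def, hc1, Prod.ext_iff, eq_comm] using And.intro (h 0) (h 1)

theorem affinePt_div_rep (P : Pt F) (hP : P.rep 2 ≠ 0) :
    affinePt (P.rep 0 / P.rep 2, P.rep 1 / P.rep 2) = P := by
  conv_rhs => rw [← Projectivization.mk_rep P]
  refine (Projectivization.mk_eq_mk_iff F _ _ _ _).mpr
    ⟨Units.mk0 (P.rep 2)⁻¹ (inv_ne_zero hP), ?_⟩
  ext i
  fin_cases i <;> simp [Units.smul_def, div_eq_inv_mul, hP]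

theorem range_affinePt_ne_univ : Set.range (affinePt (F := F)) ≠ Set.univ := by
  have hv : (![1, 0, 0] : Fin 3 → F) ≠ 0 := fun h => by simpa using congrFun h 0
  intro h
  obtain ⟨p, hp⟩ := h.symm ▸ Set.mem_univ (Projectivization.mk F ![1, 0, 0] hv)
  obtain ⟨c, hc⟩ := (Projectivization.mk_eq_mk_iff F _ _ _ _).mp hp
  simpa [Units.smul_def] using congrFun hc 2

theorem affinePt_mem_conicSet_iff {a b l : F} (p : F × F) :
    affinePt p ∈ conicSet F a b l ↔ a * p.1 ^ 2 + p.1 * p.2 + b * p.2 ^ 2 + l = 0 := by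
  obtain ⟨c, hc, h0, h1, h2⟩ := exists_rep_affinePt p
  change _ = 0 ↔ _
  rw [h0, h1, h2, show a * (c * p.1) ^ 2 + c * p.1 * (c * p.2) + b * (c * p.2) ^ 2 + l * c ^ 2 =
    c ^ 2 * (a * p.1 ^ 2 + p.1 * p.2 + b * p.2 ^ 2 + l) by ring, mul_eq_zero,
    or_iff_right (pow_ne_zero 2 hc)]

theorem affinePt_mem_line_iff {u v w : F} (p : F × F) :
    affinePt p ∈ {P : Pt F | u * P.rep 0 + v * P.rep 1 + w * P.rep 2 = 0} ↔
      u * p.1 + v * p.2 + w = 0 := by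
  obtain ⟨c, hc, h0, h1, h2⟩ := exists_rep_affinePt p
  change _ = 0 ↔ _
  rw [h0, h1, h2,
    show u * (c * p.1) + v * (c * p.2) + w * c = c * (u * p.1 + v * p.2 + w) by ring,
    mul_eq_zero, or_iff_right hc]

end AffineChart

section Denniston

variable {F : Type} [Field F] [CharP F 2] {α : F}

theorem affinePt_mem_dennistonSet_iff (hα : ∀ t : F, t ^ 2 + t ≠ α) (A : AddSubgroup F)
    (p : F × F) :
    affinePt p ∈ dennistonSet F α A ↔ α * p.1 ^ 2 + p.1 * p.2 + p.2 ^ 2 ∈ A := by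
  simp only [dennistonSet, Set.mem_union, Set.mem_singleton_iff, Set.mem_iUnion₂, Set.mem_sdiff,
    SetLike.mem_coe, affinePt_mem_conicSet_iff, one_mul, ← affinePt_zero,
    affinePt_injective.eq_iff]
  constructor
  · rintro (rfl | ⟨l, ⟨hl, -⟩, hQ⟩)
    · simp
    · rwa [CharTwo.add_eq_zero.mp hQ]
  · intro hQ
    by_cases hQ0 : α * p.1 ^ 2 + p.1 * p.2 + p.2 ^ 2 = 0
    · exact Or.inl (Prod.ext_iff.mpr (eq_zero_of_quadForm_eq_zero hα hQ0))
    · exact Or.inr ⟨_, ⟨hQ, hQ0⟩, CharTwo.add_self_eq_zero _⟩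

theorem dennistonSet_subset_range_affinePt (hα : ∀ t : F, t ^ 2 + t ≠ α) (A : Set F) :
    dennistonSet F α A ⊆ Set.range affinePt := by
  rintro P (rfl | hP)
  · exact ⟨0, affinePt_zero⟩
  obtain ⟨l, -, hl⟩ := Set.mem_iUnion₂.mp hP
  refine ⟨_, affinePt_div_rep P fun h2 => P.rep_nonzero ?_⟩
  have hQ : α * P.rep 0 ^ 2 + P.rep 0 * P.rep 1 + P.rep 1 ^ 2 = 0 := by
    simpa [conicSet, h2] using hl
  obtain ⟨h0, h1⟩ := eq_zero_of_quadForm_eq_zero hα hQ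
  ext i
  fin_cases i <;> simp [h0, h1, h2]

theorem dennistonSet_inter_line (hα : ∀ t : F, t ^ 2 + t ≠ α) (A : AddSubgroup F) (u v w : F) :
    dennistonSet F α A ∩ {P | u * P.rep 0 + v * P.rep 1 + w * P.rep 2 = 0} =
      affinePt '' {p | α * p.1 ^ 2 + p.1 * p.2 + p.2 ^ 2 ∈ A ∧ u * p.1 + v * p.2 + w = 0} := by
  ext P
  constructor
  · rintro ⟨hK, hL⟩
    obtain ⟨p, rfl⟩ := dennistonSet_subset_range_affinePt hα A hK
    exact ⟨p, ⟨(affinePt_mem_dennistonSet_iff hα A p).mp hK, (affinePt_mem_line_iff p).mp hL⟩,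
      rfl⟩
  · rintro ⟨p, ⟨hK, hL⟩, rfl⟩
    exact ⟨(affinePt_mem_dennistonSet_iff hα A p).mpr hK, (affinePt_mem_line_iff p).mpr hL⟩

end Denniston

section AffineCount

variable {F : Type} [Field F] [CharP F 2] [Finite F] {α : F}

theorem ncard_setOf_quadForm_mem_line_eq_zero_or (hα : ∀ t : F, t ^ 2 + t ≠ α) (A : AddSubgroup F)
    {u v w : F} (huvw : ¬(u = 0 ∧ v = 0 ∧ w = 0)) :
    {p : F × F | α * p.1 ^ 2 + p.1 * p.2 + p.2 ^ 2 ∈ A ∧ u * p.1 + v * p.2 + w = 0}.ncard = 0 ∨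
      {p : F × F | α * p.1 ^ 2 + p.1 * p.2 + p.2 ^ 2 ∈ A ∧ u * p.1 + v * p.2 + w = 0}.ncard =
        Nat.card A := by
  by_cases huv : u = 0 ∧ v = 0
  · obtain ⟨rfl, rfl⟩ := huv
    have hw : w ≠ 0 := fun hw => huvw ⟨rfl, rfl, hw⟩
    simp [hw]
  obtain ⟨x₀, y₀, h₀⟩ : ∃ x₀ y₀ : F, u * x₀ + v * y₀ + w = 0 := by
    rcases not_and_or.mp huv with hu | hv
    · exact ⟨-w / u, 0, by field_simp; ring⟩
    · exact ⟨0, -w / v, by field_simp; ring⟩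
  set a := α * v ^ 2 + v * -u + (-u) ^ 2
  set c := α * x₀ ^ 2 + x₀ * y₀ + y₀ ^ 2
  have hQ : ∀ t, α * (x₀ + t * v) ^ 2 + (x₀ + t * v) * (y₀ - t * u) + (y₀ - t * u) ^ 2 =
      a * t ^ 2 + w * t + c := fun t => by
    linear_combination
      -t * h₀ + t * (α * v * x₀ + v * y₀ - u * y₀) * CharTwo.two_eq_zero (R := F)
  have hset : {p : F × F | α * p.1 ^ 2 + p.1 * p.2 + p.2 ^ 2 ∈ A ∧ u * p.1 + v * p.2 + w = 0} =
      (fun t : F => (x₀ + t * v, y₀ - t * u)) '' {t | a * t ^ 2 + w * t + c ∈ A} := by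
    rw [Set.ofPred_and, setOf_line_eq_range huv h₀, ← Set.image_preimage_eq_inter_range]
    ext t
    simp [hQ]
  rw [hset, Set.ncard_image_of_injective _ (injective_line_param huv x₀ y₀)]
  refine ncard_setOf_quadratic_mem_eq_zero_or (fun ha => huv ?_) (fun hw t ht => hw ?_) A
  · obtain ⟨hv, hu⟩ := eq_zero_of_quadForm_eq_zero hα ha
    exact ⟨neg_eq_zero.mp hu, hv⟩
  · obtain ⟨hx, hy⟩ := eq_zero_of_quadForm_eq_zero hα ((hQ t).trans ht)
    linear_combination h₀ - u * hx - v * hy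

end AffineCount

end MaxArc

theorem statement2_general {F : Type} [Field F] [Fintype F] (h : ℕ)
    (hcard : Fintype.card F = 2 ^ h)
    (α : F) (htr : MaxArc.tr F h α = 1)
    (A : AddSubgroup F) :
    MaxArc.IsMaximalArc F (MaxArc.dennistonSet F α (A : Set F)) (Nat.card A) := by
  have := MaxArc.charP_two_of_card_eq_two_pow hcard
  have hα : ∀ t : F, t ^ 2 + t ≠ α := fun t ht => by
    simp [← ht, MaxArc.tr_sq_add_self hcard] at htr
  refine ⟨⟨MaxArc.pt001 F, Or.inl rfl⟩, fun huniv => ?_, ?_⟩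
  · exact MaxArc.range_affinePt_ne_univ (F := F) <| Set.eq_univ_of_univ_subset <|
      huniv ▸ MaxArc.dennistonSet_subset_range_affinePt hα _
  · rintro L ⟨u, v, w, huvw, rfl⟩
    rw [MaxArc.dennistonSet_inter_line hα,
      Set.ncard_image_of_injective _ MaxArc.affinePt_injective]
    exact MaxArc.ncard_setOf_quadForm_mem_line_eq_zero_or hα A huvw

/-- Denniston's construction: for `Tr(α) = 1` and an additive subgroup
`A` of `GF(q)` with `|A| ≥ 2`, the set `{(0,0,1)} ∪ ⋃_{λ ∈ A \ {0}} F_{α,1,λ}` is a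
maximal arc of degree `|A|` in `PG(2,q)`. -/
theorem statement2 {F : Type} [Field F] [Fintype F] (h : ℕ)
    (hcard : Fintype.card F = 2 ^ h)
    (α : F) (htr : MaxArc.tr F h α = 1)
    (A : AddSubgroup F) (hA : 2 ≤ Nat.card A) :
    MaxArc.IsMaximalArc F (MaxArc.dennistonSet F α (A : Set F)) (Nat.card A) :=
  statement2_general h hcard α htr A
end
end

section
/- Let q = 2^h, let M be a maximal arc of degree d of Mathon type in PG(2,q) with nucleus n, where d < q/2, and let C be a nondegenerate conic of PG(2,q) with nucleus n that is disjoint from M. Then there exists a line of PG(2,q) meeting neither M nor C. -/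
open scoped Classical

noncomputable section

/-!
If every line met `M ∪ C`, every line external to the maximal arc `M` would be a secant of `C`:
it cannot miss `C`, and it cannot be a tangent, because all tangents of `C` pass through the
nucleus `n`, which lies in `M`. Now count. A maximal arc of degree `d` in a plane of order `q` has
`(q+1)(d-1)+1` points, every point off it lies on `q/d` external lines, and there are
`q(q+1-d)/d` external lines in all. Counting incidences between the external lines and the
`q+1` points of `C` gives `2q(q+1-d)/d = (q+1)q/d`, that is `q+1 = 2d`, contradicting `2d < q`.
-/

open Finset Matrix Configuration ProjectivePlane

lemma Finset.sum_add_mul_card_filter_eq_zero {ι : Type*} {s : Finset ι} {f : ι → ℕ} {d : ℕ}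
    (h : ∀ i ∈ s, f i = 0 ∨ f i = d) : ∑ i ∈ s, f i + d * #{i ∈ s | f i = 0} = d * #s := by
  rw [card_filter, mul_sum, ← sum_add_distrib, card_eq_sum_ones, mul_sum]
  refine sum_congr rfl fun i hi => ?_
  rcases h i hi with h0 | hd <;> simp [*]

namespace Configuration.ProjectivePlane

variable {P L : Type*} [Membership P L] [ProjectivePlane P L] [Fintype P] [Fintype L]

variable (L) in
def IsMaximalArc (K : Finset P) (d : ℕ) : Prop :=
  K.Nonempty ∧ ∀ l : L, #{p ∈ K | p ∈ l} = 0 ∨ #{p ∈ K | p ∈ l} = d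

variable (L) in
def externalLines (K : Finset P) : Finset L := {l | #{p ∈ K | p ∈ l} = 0}

lemma card_lines_through (p : P) : #{l : L | p ∈ l} = order P L + 1 := by
  rw [← lineCount_eq L p, lineCount, Nat.card_eq_fintype_card, Fintype.card_subtype]

lemma card_lines_through_pair (p x : P) :
    #{l : L | p ∈ l ∧ x ∈ l} = 1 + if x = p then order P L else 0 := by
  split_ifs with hxp
  · simp only [hxp, and_self, card_lines_through, add_comm]
  · rw [add_zero, card_eq_one_iff_existsUnique]
    simpa using HasLines.existsUnique_line P L p x (Ne.symm hxp)

lemma sum_card_inter_lines_through (K : Finset P) (p : P) :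
    ∑ l with p ∈ l, #{x ∈ K | x ∈ (l : L)} = #K + if p ∈ K then order P L else 0 := by
  have flags := sum_card_bipartiteAbove_eq_sum_card_bipartiteBelow
    (r := fun x (l : L) => x ∈ l) (s := K) (t := {l | p ∈ l})
  simp only [bipartiteAbove, bipartiteBelow, filter_filter, card_lines_through_pair] at flags
  rw [← flags, sum_add_distrib, sum_ite_eq', card_eq_sum_ones]

lemma sum_card_inter_lines (K : Finset P) :
    ∑ l : L, #{x ∈ K | x ∈ l} = #K * (order P L + 1) := by
  have flags := sum_card_bipartiteAbove_eq_sum_card_bipartiteBelow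
    (r := fun x (l : L) => x ∈ l) (s := K) (t := univ)
  simp only [bipartiteAbove, bipartiteBelow, card_lines_through] at flags
  rw [← flags, sum_const, smul_eq_mul]

namespace IsMaximalArc

variable {K : Finset P} {d : ℕ}

lemma card_add_order_eq_mul (hK : IsMaximalArc L K d) :
    #K + order P L = (order P L + 1) * d := by
  obtain ⟨m, hm⟩ := hK.1
  have hd : ∀ l ∈ ({l | m ∈ l} : Finset L), #{p ∈ K | p ∈ l} = d := fun l hl =>
    (hK.2 l).resolve_left (card_ne_zero_of_mem (mem_filter.2 ⟨hm, (mem_filter.1 hl).2⟩))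
  rw [← card_lines_through m, ← sum_const_nat hd, sum_card_inter_lines_through, if_pos hm]

lemma mul_card_externalLines_through (hK : IsMaximalArc L K d) {c : P} (hc : c ∉ K) :
    d * #{l ∈ externalLines L K | c ∈ l} = order P L := by
  have split := sum_add_mul_card_filter_eq_zero (s := {l : L | c ∈ l}) fun l _ => hK.2 l
  rw [sum_card_inter_lines_through, if_neg hc, add_zero, card_lines_through, filter_filter]
    at split
  rw [externalLines, filter_filter]
  simp only [and_comm] at split ⊢
  linarith [hK.card_add_order_eq_mul]

lemma mul_card_externalLines_add (hK : IsMaximalArc L K d) :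
    d * #(externalLines L K) + order P L * d = order P L * (order P L + 1) := by
  have split := sum_add_mul_card_filter_eq_zero (s := (univ : Finset L)) fun l _ => hK.2 l
  rw [sum_card_inter_lines, card_univ, card_lines] at split
  have hKcard := hK.card_add_order_eq_mul
  rw [externalLines]
  nlinarith

theorem order_add_one_eq_two_mul (hK : IsMaximalArc L K d) {C : Finset P}
    (hC : #C = order P L + 1) (hCK : Disjoint C K)
    (hsec : ∀ l ∈ externalLines L K, #{p ∈ C | p ∈ l} = 2) : order P L + 1 = 2 * d := by
  have flags := sum_card_bipartiteAbove_eq_sum_card_bipartiteBelow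
    (r := fun x (l : L) => x ∈ l) (s := C) (t := externalLines L K)
  simp only [bipartiteAbove, bipartiteBelow] at flags
  rw [sum_congr rfl hsec, sum_const, smul_eq_mul] at flags
  have hq : 0 < order P L := by have := one_lt_order P L; omega
  have : d * (#(externalLines L K) * 2) = order P L * (order P L + 1) := by
    rw [← flags, mul_sum, sum_congr rfl fun c hc =>
      hK.mul_card_externalLines_through (disjoint_left.1 hCK hc), sum_const, smul_eq_mul, hC,
      mul_comm]
  have := hK.mul_card_externalLines_add
  nlinarith

end IsMaximalArc

end Configuration.ProjectivePlane

namespace MaxArc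

variable {F : Type} [Field F]

lemma mem_iff_dotProduct_rep (P D : Pt F) : P ∈ D ↔ P.rep ⬝ᵥ D.rep = 0 := by
  rw [ofField.mem_iff, ← P.mk_rep, ← D.mk_rep, Projectivization.orthogonal_mk, P.mk_rep, D.mk_rep]

lemma isLine_setOf_mem (D : Pt F) : IsLine F {P | P ∈ D} := by
  refine ⟨D.rep 0, D.rep 1, D.rep 2, fun ⟨h0, h1, h2⟩ => D.rep_nonzero ?_, ?_⟩
  · ext i; fin_cases i <;> assumption
  · ext P
    simp only [Set.mem_ofPred_eq, mem_iff_dotProduct_rep, dotProduct, Fin.sum_univ_three]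
    ring_nf

lemma IsCollineation.injective {g : Pt F → Pt F} (hg : IsCollineation F g) :
    Function.Injective g := by
  obtain ⟨σ, A, hA, hg⟩ := hg
  have hf_inj : Function.Injective fun v : Fin 3 → F => A *ᵥ fun i => σ (v i) := by
    intro v w h
    have := mulVec_injective_iff_isUnit.mpr ((isUnit_iff_isUnit_det A).mpr hA) h
    funext i
    exact σ.injective (congrFun this i)
  have hf_ne : ∀ v : Fin 3 → F, v ≠ 0 → (A *ᵥ fun i => σ (v i)) ≠ 0 := fun v hv h0 =>
    hv (hf_inj (h0.trans (by simp [← Pi.zero_def])))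
  intro P Q hPQ
  induction P using Projectivization.ind with | h v hv =>
  induction Q using Projectivization.ind with | h w hw =>
  rw [hg v hv (hf_ne v hv), hg w hw (hf_ne w hw), Projectivization.mk_eq_mk_iff] at hPQ
  obtain ⟨a, ha⟩ := hPQ
  rw [Projectivization.mk_eq_mk_iff]
  refine ⟨Units.map σ.symm.toRingHom.toMonoidHom a, hf_inj ?_⟩
  beta_reduce
  rw [← ha, Units.smul_def, ← mulVec_smul]
  congr 1
  funext i
  simp [Units.smul_def]

lemma IsMathonWithNucleus.nucleus_mem {h d : ℕ} {K : Set (Pt F)} {n : Pt F}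
    (hK : IsMathonWithNucleus F h K d n) : n ∈ K := by
  obtain ⟨-, g, hg, hgn, _, _, _, -, -, hgK⟩ := hK
  obtain ⟨m, hm, hgm⟩ : pt001 F ∈ g '' K := hgK ▸ Or.inl rfl
  exact hg.injective (hgm.trans hgn.symm) ▸ hm

variable [Fintype F]

instance : Fintype (Pt F) := Fintype.ofFinite _

lemma order_eq_card : order (Pt F) (Pt F) = Fintype.card F := by
  have h := card_points (Pt F) (Pt F)
  rw [← Nat.card_eq_fintype_card (α := Pt F),
    Projectivization.card_of_finrank F (Fin 3 → F) (n := 3) (by simp)] at h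
  simp only [sum_range_succ, sum_range_zero, Nat.card_eq_fintype_card] at h
  exact le_antisymm (by nlinarith) (by nlinarith)

lemma ncard_inter_setOf_mem (S : Set (Pt F)) (D : Pt F) :
    (S ∩ {P | P ∈ D}).ncard = #{P ∈ S.toFinset | P ∈ D} := by
  rw [← Set.ncard_coe_finset]
  congr 1
  ext P
  simp

lemma IsMaximalArc.toFinset {K : Set (Pt F)} {d : ℕ} (hK : IsMaximalArc F K d) :
    ProjectivePlane.IsMaximalArc (Pt F) K.toFinset d :=
  ⟨Set.toFinset_nonempty.2 hK.1, fun D => by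
    simpa only [ncard_inter_setOf_mem] using hK.2.2 _ (isLine_setOf_mem D)⟩

lemma IsConicWithNucleus.card_inter_eq_two_of_mem_externalLines {C M : Set (Pt F)} {n : Pt F}
    (hC : IsConicWithNucleus F C n) (hn : n ∈ M)
    (hMC : ∀ L : Set (Pt F), IsLine F L → (L ∩ (M ∪ C)).Nonempty)
    {D : Pt F} (hD : D ∈ externalLines (Pt F) M.toFinset) : #{P ∈ C.toFinset | P ∈ D} = 2 := by
  obtain ⟨-, -, hsec, htan⟩ := hC
  have hL := isLine_setOf_mem D
  have hMD : ∀ P ∈ M, P ∉ D := by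
    have : M ∩ {P | P ∈ D} = ∅ := by
      rw [← Set.ncard_eq_zero, ncard_inter_setOf_mem]
      exact (mem_filter.1 hD).2
    exact fun P hPM hPD => Set.eq_empty_iff_forall_notMem.1 this P ⟨hPM, hPD⟩
  obtain ⟨P, hPD, hPM | hPC⟩ := hMC _ hL
  · exact absurd hPD (hMD P hPM)
  rw [← ncard_inter_setOf_mem]
  have hpos : (C ∩ {P | P ∈ D}).ncard ≠ 0 := Set.ncard_ne_zero_of_mem ⟨hPC, hPD⟩
  have hne1 : (C ∩ {P | P ∈ D}).ncard ≠ 1 := fun h1 => hMD n hn (htan _ hL h1)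
  have := hsec _ hL
  omega

end MaxArc

theorem statement4_general {F : Type} [Field F] [Fintype F] (h : ℕ)
    (M : Set (MaxArc.Pt F)) (d : ℕ) (n : MaxArc.Pt F)
    (hM : MaxArc.IsMathonWithNucleus F h M d n)
    (hd : 2 * d < Fintype.card F)
    (C : Set (MaxArc.Pt F)) (hC : MaxArc.IsConicWithNucleus F C n)
    (hdisj : Disjoint C M) :
    ∃ L : Set (MaxArc.Pt F), MaxArc.IsLine F L ∧ L ∩ (M ∪ C) = ∅ := by
  have hnM := hM.nucleus_mem
  by_contra! hMC
  have hCcard : #C.toFinset = order (MaxArc.Pt F) (MaxArc.Pt F) + 1 := by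
    rw [MaxArc.order_eq_card, ← hC.2.1, Set.ncard_eq_toFinset_card']
  have := hM.1.toFinset.order_add_one_eq_two_mul hCcard (Set.disjoint_toFinset.2 hdisj)
    fun D hD => hC.card_inter_eq_two_of_mem_externalLines hnM hMC hD
  rw [MaxArc.order_eq_card] at this
  omega

/-- given a degree `d < q/2` maximal arc `M` of Mathon type with
nucleus `n` and a nondegenerate conic `C` with the same nucleus disjoint from `M`,
there is a line external to `M ∪ C`. -/
theorem statement4 {F : Type} [Field F] [Fintype F] (h : ℕ)
    (hcard : Fintype.card F = 2 ^ h)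
    (M : Set (MaxArc.Pt F)) (d : ℕ) (n : MaxArc.Pt F)
    (hM : MaxArc.IsMathonWithNucleus F h M d n)
    (hd : 2 * d < Fintype.card F)
    (C : Set (MaxArc.Pt F)) (hC : MaxArc.IsConicWithNucleus F C n)
    (hdisj : Disjoint C M) :
    ∃ L : Set (MaxArc.Pt F), MaxArc.IsLine F L ∧ L ∩ (M ∪ C) = ∅ :=
  statement4_general h M d n hM hd C hC hdisj
end
end

section
/- Let p be a prime with p ≠ 2 and p ≠ 3, let w ∈ GF(2^p) \ {0,1}, and set A = {0, 1, w, w+1}. If a ∈ GF(2^p) \ {0} and l is an integer with 0 ≤ l < p such that the map x ↦ a·x^(2^l) maps A onto A, then a = 1 and l = 0 (i.e. the map is the identity on GF(2^p)). -/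
open scoped Classical

noncomputable section

/-!
The map `ψ x = a * x ^ 2 ^ l` permutes the four-element set `A`, so `ψ^[24]` fixes `A` pointwise.
Since `ψ^[k] x = ψ^[k] 1 * x ^ 2 ^ (l * k)` and `ψ^[24] 1 = 1`, this gives
`w ^ 2 ^ (l * 24) = w`. For `0 < l < p` with `p ≠ 2, 3` the exponent `l * 24` is prime to `p`,
so `w` would be fixed by the Frobenius and lie in `GF(2)`. Hence `l = 0`, and then
`a ^ 24 = 1 = a ^ (2 ^ p - 1)` forces `a = 1`, as `24` is prime to `2 ^ p - 1` for odd `p`.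
-/

open Function
open scoped Nat

theorem Set.Finite.isPeriodicPt_factorial_of_image_eq {α : Type*} {f : α → α} {s : Set α}
    (hs : s.Finite) (hf : f '' s = s) {x : α} (hx : x ∈ s) :
    IsPeriodicPt f (s.ncard)! x := by
  have hmaps : Set.MapsTo f s s := by
    simpa only [hf] using Set.mapsTo_image f s
  have hbij : Set.BijOn f s s :=
    (hs.surjOn_iff_bijOn_of_mapsTo hmaps).1 (by simpa only [hf] using Set.surjOn_image f s)
  have := hs.to_subtype
  have hperm : hbij.equiv f ^ (s.ncard)! = 1 := by
    rw [← Nat.card_coe_set_eq, ← Nat.card_perm]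
    exact pow_card_eq_one'
  have hrestrict : ⇑(hbij.equiv f) = hmaps.restrict f s s := rfl
  have := congrArg (fun e : Equiv.Perm s => (e ⟨x, hx⟩ : α)) hperm
  show f^[_] x = x
  simpa only [Equiv.Perm.coe_pow, hrestrict, Set.MapsTo.iterate_restrict, Equiv.Perm.one_apply,
    Set.MapsTo.val_restrict_apply] using this

theorem iterate_mul_pow {M : Type*} [CommMonoid M] (a : M) (n k : ℕ) (x : M) :
    (fun y => a * y ^ n)^[k] x = (fun y => a * y ^ n)^[k] 1 * x ^ n ^ k := by
  induction k generalizing x with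
  | zero => simp
  | succ k ih =>
    rw [iterate_succ_apply', iterate_succ_apply', ih x, ih 1]
    simp only [one_pow, mul_one, mul_pow, ← pow_mul, pow_succ, mul_assoc]

theorem pow_two_pow_gcd_eq_self {M : Type*} [Monoid M] {x : M} {m n : ℕ}
    (hm : x ^ 2 ^ m = x) (hn : x ^ 2 ^ n = x) : x ^ 2 ^ m.gcd n = x := by
  have key : ∀ k, IsPeriodicPt (· ^ 2) k x ↔ x ^ 2 ^ k = x := fun k => by
    simp only [IsPeriodicPt, IsFixedPt, pow_iterate]
  exact (key _).1 (((key m).2 hm).gcd ((key n).2 hn))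

theorem FiniteField.eq_zero_or_one_of_pow_two_pow_eq_self {K : Type*} [Field K] [Fintype K]
    {p m : ℕ} (hcard : Fintype.card K = 2 ^ p) (hmp : m.Coprime p) {x : K}
    (hx : x ^ 2 ^ m = x) : x = 0 ∨ x = 1 := by
  have hp : x ^ 2 ^ p = x := hcard ▸ FiniteField.pow_card x
  have h := pow_two_pow_gcd_eq_self hx hp
  rw [hmp.gcd_eq_one, pow_one, sq] at h
  exact IsIdempotentElem.iff_eq_zero_or_one.mp h

theorem Nat.coprime_twentyFour_two_pow_sub_one {p : ℕ} (hp : Odd p) : Coprime 24 (2 ^ p - 1) := by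
  obtain ⟨k, rfl⟩ := hp
  have hmod3 : 2 ^ (2 * k + 1) % 3 = 2 := by
    rw [pow_succ, pow_mul, Nat.mul_mod, Nat.pow_mod]; norm_num
  have hpos : 1 ≤ 2 ^ (2 * k + 1) := Nat.one_le_two_pow
  have h2 : Coprime (2 ^ 3) (2 ^ (2 * k + 1) - 1) := by
    refine Coprime.pow_left _ (coprime_two_left.2 ?_)
    rw [Nat.odd_sub hpos]; simp [Nat.even_pow]
  have h3 : Coprime 3 (2 ^ (2 * k + 1) - 1) :=
    (Nat.Prime.coprime_iff_not_dvd prime_three).2 (by omega)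
  exact Coprime.mul_left h2 h3

theorem Nat.Prime.coprime_mul_twentyFour_of_lt {p l : ℕ} (hp : p.Prime) (hp2 : p ≠ 2)
    (hp3 : p ≠ 3) (hl0 : l ≠ 0) (hl : l < p) : Coprime p (l * 24) := by
  have hpl : Coprime p l :=
    hp.coprime_iff_not_dvd.2 fun h => (Nat.le_of_dvd (Nat.pos_of_ne_zero hl0) h).not_gt hl
  have hp24 : Coprime p (2 ^ 3 * 3) :=
    (((coprime_primes hp prime_two).2 hp2).pow_right 3).mul_right
      ((coprime_primes hp prime_three).2 hp3)
  exact hpl.mul_right hp24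

theorem statement8_general {F : Type} [Field F] [Fintype F] (p : ℕ)
    (hp : p.Prime) (hp2 : p ≠ 2) (hp3 : p ≠ 3)
    (hcard : Fintype.card F = 2 ^ p)
    (w : F) (hw0 : w ≠ 0) (hw1 : w ≠ 1)
    (a : F) (l : ℕ) (hl : l < p)
    (hmap : (fun x : F => a * x ^ 2 ^ l) '' ({0, 1, w, w + 1} : Set F)
      = ({0, 1, w, w + 1} : Set F)) :
    a = 1 ∧ l = 0 := by
  set A : Set F := {0, 1, w, w + 1}
  set ψ := fun x : F => a * x ^ 2 ^ l
  have hcardA : A.ncard ≤ 4 := by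
    refine (Set.ncard_insert_le _ _).trans (Nat.succ_le_succ ?_)
    refine (Set.ncard_insert_le _ _).trans (Nat.succ_le_succ ?_)
    exact (Set.ncard_insert_le _ _).trans (by rw [Set.ncard_singleton])
  have hper : ∀ x ∈ A, ψ^[24] x = x := fun x hx =>
    ((Set.toFinite A).isPeriodicPt_factorial_of_image_eq hmap hx).trans_dvd
      (Nat.factorial_dvd_factorial hcardA)
  have hψ1 : ψ^[24] 1 = 1 := hper 1 (by simp [A])
  have hl0 : l = 0 := by
    by_contra hl0
    have hw : w ^ 2 ^ (l * 24) = w := by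
      have := iterate_mul_pow a (2 ^ l) 24 w
      rwa [hψ1, one_mul, ← pow_mul, hper w (by simp [A]), eq_comm] at this
    rcases FiniteField.eq_zero_or_one_of_pow_two_pow_eq_self hcard
      (Nat.Prime.coprime_mul_twentyFour_of_lt hp hp2 hp3 hl0 hl).symm hw with h | h
    exacts [hw0 h, hw1 h]
  subst hl0
  have ha24 : a ^ 24 = 1 := by
    simpa only [ψ, pow_zero, pow_one, mul_left_iterate, mul_one] using hψ1
  have ha0 : a ≠ 0 := by rintro rfl; simp at ha24
  have hacard : a ^ (2 ^ p - 1) = 1 := hcard ▸ FiniteField.pow_card_sub_one_eq_one a ha0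
  have ha1 := pow_gcd_eq_one.2 ⟨ha24, hacard⟩
  rw [(Nat.coprime_twentyFour_two_pow_sub_one (hp.odd_of_ne_two hp2)).gcd_eq_one, pow_one] at ha1
  exact ⟨ha1, rfl⟩

/-- in `GF(2^p)`, `p` prime, `p ≠ 2,3`, the only map of the form
`x ↦ a·x^(2^l)` (`a ≠ 0`, `0 ≤ l < p`) mapping `A = {0,1,w,w+1}` onto itself is the
identity, i.e. `a = 1` and `l = 0`. -/
theorem statement8 {F : Type} [Field F] [Fintype F] (p : ℕ)
    (hp : p.Prime) (hp2 : p ≠ 2) (hp3 : p ≠ 3)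
    (hcard : Fintype.card F = 2 ^ p)
    (w : F) (hw0 : w ≠ 0) (hw1 : w ≠ 1)
    (a : F) (ha : a ≠ 0) (l : ℕ) (hl : l < p)
    (hmap : (fun x : F => a * x ^ 2 ^ l) '' ({0, 1, w, w + 1} : Set F)
      = ({0, 1, w, w + 1} : Set F)) :
    a = 1 ∧ l = 0 :=
  statement8_general p hp hp2 hp3 hcard w hw0 hw1 a l hl hmap
end
end

section
/- Let K be a maximal arc of degree d in a finite projective plane of order q. Then every point not in K lies on exactly q/d lines disjoint from K (and hence on exactly q+1−q/d lines meeting K in d points), while every point of K lies on no line disjoint from K. In particular, the set of lines disjoint from K, viewed as a set of points of the dual plane, is a maximal arc of degree q/d of the dual plane. -/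
open scoped Classical

noncomputable section

namespace MaxArcPlane

open Configuration

variable (P L : Type) [Membership P L]

/-- A maximal arc of degree `d` in a projective plane: a nonempty proper set of
points such that every line meets it in exactly `0` or `d` points. -/
def IsMaximalArc (K : Set P) (d : ℕ) : Prop :=
  K.Nonempty ∧ K ≠ Set.univ ∧
    ∀ l : L, {p : P | p ∈ K ∧ p ∈ l}.ncard = 0 ∨ {p : P | p ∈ K ∧ p ∈ l}.ncard = d

end MaxArcPlane

section Aux

variable {P L : Type} [Membership P L] [Fintype P] [Fintype L]
    [Configuration.ProjectivePlane P L]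

/-- Number of lines through a point, as a filter card. -/
lemma aux_lines_through (p : P) :
    (Finset.univ.filter fun l : L => p ∈ l).card =
      Configuration.ProjectivePlane.order P L + 1 := by
  have := Configuration.ProjectivePlane.lineCount_eq L p
  rwa [Configuration.lineCount, Nat.card_eq_fintype_card, Fintype.card_subtype] at this

/-- Unique line through two distinct points. -/
lemma aux_unique_line {p x : P} (h : p ≠ x) :
    (Finset.univ.filter fun l : L => p ∈ l ∧ x ∈ l).card = 1 := by
  rw [Finset.card_eq_one]
  refine ⟨Configuration.HasLines.mkLine h, ?_⟩
  ext l
  simp only [Finset.mem_filter, Finset.mem_univ, true_and, Finset.mem_singleton]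
  constructor
  · rintro ⟨hp, hx⟩
    exact (Configuration.Nondegenerate.eq_or_eq hp hx
      (Configuration.HasLines.mkLine_ax h).1 (Configuration.HasLines.mkLine_ax h).2).resolve_left h
  · rintro rfl
    exact Configuration.HasLines.mkLine_ax h

lemma aux_ncard_filter (K : Set P) (l : L) :
    {x : P | x ∈ K ∧ x ∈ l}.ncard = (Finset.univ.filter fun x : P => x ∈ K ∧ x ∈ l).card := by
  rw [Set.ncard_eq_toFinset_card', Set.toFinset_setOf]

lemma aux_double_count (K : Set P) (p : P) :
    ∑ l ∈ Finset.univ.filter (fun l : L => p ∈ l),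
        (Finset.univ.filter fun x : P => x ∈ K ∧ x ∈ l).card =
      ∑ x ∈ Finset.univ.filter (fun x : P => x ∈ K),
        (Finset.univ.filter fun l : L => p ∈ l ∧ x ∈ l).card := by
  simp only [Finset.card_filter, Finset.sum_filter]
  have e1 : ∀ l : L, (if p ∈ l then ∑ i : P, (if i ∈ K ∧ i ∈ l then (1:ℕ) else 0) else 0)
      = ∑ i : P, (if p ∈ l ∧ (i ∈ K ∧ i ∈ l) then (1:ℕ) else 0) := by
    intro l; split_ifs with h <;> simp [h]
  have e2 : ∀ x : P, (if x ∈ K then ∑ l : L, (if p ∈ l ∧ x ∈ l then (1:ℕ) else 0) else 0)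
      = ∑ l : L, (if p ∈ l ∧ (x ∈ K ∧ x ∈ l) then (1:ℕ) else 0) := by
    intro x; split_ifs with h <;> simp +contextual [h, and_assoc, and_comm (a := x ∈ K)]
  rw [Finset.sum_congr rfl fun l _ => e1 l, Finset.sum_comm,
    Finset.sum_congr rfl fun x _ => e2 x]

end Aux

/-- for a maximal arc `K` of degree `d` in a finite projective plane of
order `q`: every point not in `K` lies on exactly `q/d` external lines (hence on
exactly `q+1-q/d` lines meeting `K` in `d` points), every point of `K` lies on no
external line, and the set of external lines is a maximal arc of degree `q/d` of the
dual plane (i.e. it is a nonempty proper set of lines such that every point lies on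
exactly `0` or `q/d` of them). -/
theorem statement17 {P L : Type} [Membership P L] [Fintype P] [Fintype L]
    [Configuration.ProjectivePlane P L]
    (K : Set P) (d : ℕ) (hK : MaxArcPlane.IsMaximalArc P L K d) :
    (∀ p : P, p ∉ K →
      {l : L | p ∈ l ∧ ∀ x ∈ K, x ∉ l}.ncard = Configuration.ProjectivePlane.order P L / d) ∧
    (∀ p : P, p ∉ K →
      {l : L | p ∈ l ∧ {x : P | x ∈ K ∧ x ∈ l}.ncard = d}.ncard =
        Configuration.ProjectivePlane.order P L + 1 -
          Configuration.ProjectivePlane.order P L / d) ∧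
    (∀ p ∈ K, {l : L | p ∈ l ∧ ∀ x ∈ K, x ∉ l}.ncard = 0) ∧
    ({l : L | ∀ x ∈ K, x ∉ l}.Nonempty ∧ {l : L | ∀ x ∈ K, x ∉ l} ≠ Set.univ ∧
      ∀ p : P, {l : L | (∀ x ∈ K, x ∉ l) ∧ p ∈ l}.ncard = 0 ∨
        {l : L | (∀ x ∈ K, x ∉ l) ∧ p ∈ l}.ncard =
          Configuration.ProjectivePlane.order P L / d) := by
  classical
  set q := Configuration.ProjectivePlane.order P L with hq
  obtain ⟨⟨p₀, hp₀⟩, hKuniv, harc⟩ := hK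
  -- a line through any point exists
  have hline : ∀ p : P, ∃ l : L, p ∈ l := by
    intro p
    have h := aux_lines_through (L := L) p
    have : (Finset.univ.filter fun l : L => p ∈ l).Nonempty := by
      rw [← Finset.card_pos, h]; omega
    obtain ⟨l, hl⟩ := this
    exact ⟨l, (Finset.mem_filter.mp hl).2⟩
  -- any line through a point of K meets K in d points
  have hmeet : ∀ (p : P), p ∈ K → ∀ l : L, p ∈ l →
      {x : P | x ∈ K ∧ x ∈ l}.ncard = d := by
    intro p hp l hl
    refine (harc l).resolve_left ?_
    have hfin : {x : P | x ∈ K ∧ x ∈ l}.Finite := Set.toFinite _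
    rw [Set.ncard_eq_zero hfin]
    intro h
    exact absurd (h ▸ (⟨hp, hl⟩ : p ∈ {x : P | x ∈ K ∧ x ∈ l})) (Set.notMem_empty p)
  have hd1 : 1 ≤ d := by
    obtain ⟨l, hl⟩ := hline p₀
    have := hmeet p₀ hp₀ l hl
    rw [aux_ncard_filter] at this
    have hpos : 0 < (Finset.univ.filter fun x : P => x ∈ K ∧ x ∈ l).card :=
      Finset.card_pos.mpr ⟨p₀, by simp [hp₀, hl]⟩
    omega
  -- |K| as a finset card
  set Kf := Finset.univ.filter (fun x : P => x ∈ K) with hKf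
  -- counting at a point of K : d * (q+1) = (q+1) + (Kf.card - 1)
  have hcardK : d * (q + 1) = q + Kf.card := by
    have hdc := aux_double_count (L := L) K p₀
    have hlhs : ∑ l ∈ Finset.univ.filter (fun l : L => p₀ ∈ l),
        (Finset.univ.filter fun x : P => x ∈ K ∧ x ∈ l).card = (q + 1) * d := by
      rw [Finset.sum_congr rfl fun l hl => ?_, Finset.sum_const, smul_eq_mul,
        aux_lines_through (L := L) p₀]
      rw [← aux_ncard_filter]
      exact hmeet p₀ hp₀ l (Finset.mem_filter.mp hl).2
    have hp₀K : p₀ ∈ Kf := by simp [hKf, hp₀]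
    have hrhs : ∑ x ∈ Kf, (Finset.univ.filter fun l : L => p₀ ∈ l ∧ x ∈ l).card =
        (q + 1) + (Kf.card - 1) := by
      rw [← Finset.add_sum_erase _ _ hp₀K]
      have h1 : (Finset.univ.filter fun l : L => p₀ ∈ l ∧ p₀ ∈ l).card = q + 1 := by
        simpa [and_self] using aux_lines_through (L := L) p₀
      have h2 : ∑ x ∈ Kf.erase p₀, (Finset.univ.filter fun l : L => p₀ ∈ l ∧ x ∈ l).card =
          Kf.card - 1 := by
        rw [Finset.sum_congr rfl fun x hx => aux_unique_line (Finset.ne_of_mem_erase hx).symm,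
          Finset.sum_const, smul_eq_mul, mul_one, Finset.card_erase_of_mem hp₀K]
      rw [h1, h2]
    have : (q + 1) * d = (q + 1) + (Kf.card - 1) := by rw [← hlhs, hdc, hrhs]
    have hKpos : 0 < Kf.card := Finset.card_pos.mpr ⟨p₀, hp₀K⟩
    have : d * (q + 1) = (q + 1) * d := mul_comm _ _
    omega
  -- counting at a point not in K
  have hkey : ∀ p : P, p ∉ K →
      (Finset.univ.filter fun l : L => p ∈ l ∧ {x : P | x ∈ K ∧ x ∈ l}.ncard = 0).card = q / d ∧
      (Finset.univ.filter fun l : L => p ∈ l ∧ {x : P | x ∈ K ∧ x ∈ l}.ncard = d).card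
        = q + 1 - q / d ∧ d * (q / d) = q := by
    intro p hp
    set A := Finset.univ.filter
      (fun l : L => p ∈ l ∧ {x : P | x ∈ K ∧ x ∈ l}.ncard = d) with hA
    set B := Finset.univ.filter
      (fun l : L => p ∈ l ∧ {x : P | x ∈ K ∧ x ∈ l}.ncard = 0) with hB
    have hsplit : A.card + B.card = q + 1 := by
      rw [← Finset.card_union_of_disjoint]
      · rw [← aux_lines_through (L := L) p]
        congr 1
        ext l
        simp only [hA, hB, Finset.mem_union, Finset.mem_filter, Finset.mem_univ, true_and]
        constructor
        · rintro (⟨h, -⟩ | ⟨h, -⟩) <;> exact h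
        · intro h
          rcases harc l with h0 | hd
          · exact Or.inr ⟨h, h0⟩
          · exact Or.inl ⟨h, hd⟩
      · rw [Finset.disjoint_left]
        rintro l hl hl'
        simp only [hA, hB, Finset.mem_filter] at hl hl'
        omega
    have hsum : d * A.card = q + Kf.card - q := by
      have hdc := aux_double_count (L := L) K p
      have hlhs : ∑ l ∈ Finset.univ.filter (fun l : L => p ∈ l),
          (Finset.univ.filter fun x : P => x ∈ K ∧ x ∈ l).card = d * A.card := by
        rw [← Finset.sum_filter_add_sum_filter_not _
          (fun l => {x : P | x ∈ K ∧ x ∈ l}.ncard = d)]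
        have e1 : (Finset.univ.filter fun l : L => p ∈ l).filter
            (fun l => {x : P | x ∈ K ∧ x ∈ l}.ncard = d) = A := by
          rw [hA, Finset.filter_filter]
        have e2 : ∀ l ∈ (Finset.univ.filter fun l : L => p ∈ l).filter
            (fun l => ¬ {x : P | x ∈ K ∧ x ∈ l}.ncard = d),
            (Finset.univ.filter fun x : P => x ∈ K ∧ x ∈ l).card = 0 := by
          intro l hl
          simp only [Finset.mem_filter] at hl
          have := (harc l).resolve_right hl.2
          rw [aux_ncard_filter] at this
          exact this
        rw [Finset.sum_congr rfl e2, Finset.sum_const, smul_eq_mul, mul_zero, add_zero, e1,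
          Finset.sum_congr rfl (fun l hl => ?_), Finset.sum_const, smul_eq_mul, mul_comm]
        simp only [hA, Finset.mem_filter] at hl
        rw [← aux_ncard_filter, hl.2.2]
      have hrhs : ∑ x ∈ Kf, (Finset.univ.filter fun l : L => p ∈ l ∧ x ∈ l).card = Kf.card := by
        rw [Finset.sum_congr rfl fun x hx => aux_unique_line ?_, Finset.sum_const, smul_eq_mul,
          mul_one]
        simp only [hKf, Finset.mem_filter] at hx
        rintro rfl; exact hp hx.2
      rw [hlhs, hrhs] at hdc
      omega
    -- d * A.card = d*(q+1) - q, plus hsplit gives d * B.card = q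
    have hqd : d * B.card = q := by
      have h1 : d * A.card + q = d * (q + 1) := by omega
      have h2 : d * A.card + d * B.card = d * (q + 1) := by
        rw [← Nat.mul_add, hsplit]
      omega
    have hdiv : q / d = B.card := by rw [← hqd, Nat.mul_div_cancel_left _ hd1]
    exact ⟨hdiv.symm, by omega, by rw [hdiv]; exact hqd⟩
  -- translate between set descriptions
  have hext : ∀ l : L, (∀ x ∈ K, x ∉ l) ↔ {x : P | x ∈ K ∧ x ∈ l}.ncard = 0 := by
    intro l
    rw [Set.ncard_eq_zero (Set.toFinite _)]
    constructor
    · intro h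
      ext x; simp only [Set.mem_setOf_eq, Set.mem_empty_iff_false, iff_false]
      rintro ⟨h1, h2⟩; exact h x h1 h2
    · intro h x hx hxl
      exact absurd (h ▸ (⟨hx, hxl⟩ : x ∈ {x : P | x ∈ K ∧ x ∈ l})) (Set.notMem_empty x)
  have goal1 : ∀ p : P, p ∉ K →
      {l : L | p ∈ l ∧ ∀ x ∈ K, x ∉ l}.ncard = q / d := by
    intro p hp
    have := (hkey p hp).1
    rw [Set.ncard_eq_toFinset_card', Set.toFinset_setOf]
    rw [← this]
    congr 1
    ext l
    simp only [Finset.mem_filter, Finset.mem_univ, true_and, hext]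
  have goal2 : ∀ p : P, p ∉ K →
      {l : L | p ∈ l ∧ {x : P | x ∈ K ∧ x ∈ l}.ncard = d}.ncard = q + 1 - q / d := by
    intro p hp
    have := (hkey p hp).2.1
    rwa [Set.ncard_eq_toFinset_card', Set.toFinset_setOf]
  have goal3 : ∀ p ∈ K, {l : L | p ∈ l ∧ ∀ x ∈ K, x ∉ l}.ncard = 0 := by
    intro p hp
    have : {l : L | p ∈ l ∧ ∀ x ∈ K, x ∉ l} = ∅ := by
      ext l
      simp only [Set.mem_setOf_eq, Set.mem_empty_iff_false, iff_false, not_and]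
      intro hl h
      exact h p hp hl
    rw [this, Set.ncard_empty]
  refine ⟨goal1, goal2, goal3, ?_, ?_, ?_⟩
  · -- nonempty
    obtain ⟨p, hp⟩ := Set.ne_univ_iff_exists_notMem K |>.mp hKuniv
    have h1 := goal1 p hp
    have hqd : 1 ≤ q / d := by
      have h2 := (hkey p hp).2.2
      have hq2 : 1 < q := Configuration.ProjectivePlane.one_lt_order P L
      rcases Nat.eq_zero_or_pos (q / d) with h | h
      · rw [h, mul_zero] at h2; omega
      · exact h
    have hne : {l : L | p ∈ l ∧ ∀ x ∈ K, x ∉ l}.Nonempty := by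
      apply Set.nonempty_of_ncard_ne_zero
      omega
    obtain ⟨l, hl1, hl2⟩ := hne
    exact ⟨l, hl2⟩
  · -- proper
    obtain ⟨l₀, hl₀⟩ := hline p₀
    rw [Set.ne_univ_iff_exists_notMem]
    refine ⟨l₀, ?_⟩
    simp only [Set.mem_setOf_eq, not_forall]
    exact ⟨p₀, hp₀, by simp [hl₀]⟩
  · intro p
    have hcomm : {l : L | (∀ x ∈ K, x ∉ l) ∧ p ∈ l} = {l : L | p ∈ l ∧ ∀ x ∈ K, x ∉ l} := by
      ext l; simp [and_comm]
    rw [hcomm]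
    by_cases hp : p ∈ K
    · exact Or.inl (goal3 p hp)
    · exact Or.inr (goal1 p hp)
end
end

section
/- If a finite projective plane of order q contains a maximal arc of degree d, then d divides q. -/
open scoped Classical

noncomputable section

/-!
Fix a point `y` of the arc `K`. The `q + 1` lines through `y` each meet `K` in `d` points and
partition `K \ {y}`, so `|K| + q = (q + 1) d`. A point `x` outside `K` exists, and the lines
through `x` partition `K` into pieces of size `0` or `d`, so `d ∣ |K|`. Hence `d ∣ q`.
-/

namespace Configuration

open Finset

variable {P L : Type*} [Membership P L] [Fintype L]

variable (L) in
def pencil (x : P) : Finset L := {l | x ∈ l}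

@[simp]
theorem mem_pencil {x : P} {l : L} : l ∈ pencil L x ↔ x ∈ l := by
  simp [pencil]

theorem card_eq_sum_pencil_of_notMem [HasLines P L] (S : Finset P) {x : P} (hx : x ∉ S) :
    #S = ∑ l ∈ pencil L x, #{p ∈ S | p ∈ l} := by
  have hcover : S = (pencil L x).biUnion fun l => {p ∈ S | p ∈ l} := by
    ext p
    simp only [mem_biUnion, mem_pencil, mem_filter]
    refine ⟨fun hp => ?_, fun ⟨_, _, hp, _⟩ => hp⟩
    have hpx : p ≠ x := ne_of_mem_of_not_mem hp hx
    exact ⟨HasLines.mkLine hpx, (HasLines.mkLine_ax hpx).2, hp, (HasLines.mkLine_ax hpx).1⟩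
  conv_lhs => rw [hcover]
  refine card_biUnion fun l hl m hm hlm => disjoint_left.mpr fun p hpl hpm => ?_
  simp only [mem_coe, mem_pencil, mem_filter] at hl hm hpl hpm
  rcases Nondegenerate.eq_or_eq hpl.2 hl hpm.2 hm with rfl | rfl
  · exact hx hpl.1
  · exact hlm rfl

namespace ProjectivePlane

variable [Finite P] [ProjectivePlane P L]

theorem card_pencil (x : P) : #(pencil L x) = order P L + 1 := by
  rw [← lineCount_eq L x, lineCount, Nat.card_eq_fintype_card, Fintype.card_subtype, pencil]

theorem sum_pencil_eq_card_add_order (S : Finset P) {y : P} (hy : y ∈ S) :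
    ∑ l ∈ pencil L y, #{p ∈ S | p ∈ l} = #S + order P L := by
  have hline : ∀ l ∈ pencil L y, #{p ∈ S | p ∈ l} = #{p ∈ S.erase y | p ∈ l} + 1 := by
    intro l hl
    rw [filter_erase, card_erase_add_one]
    exact mem_filter.mpr ⟨hy, mem_pencil.mp hl⟩
  rw [sum_congr rfl hline, sum_add_distrib, ← card_eq_sum_pencil_of_notMem _ (S.notMem_erase y),
    sum_const, card_pencil, smul_eq_mul, mul_one, ← card_erase_add_one hy]
  ring

end ProjectivePlane

end Configuration

namespace MaxArcPlane

open Configuration ProjectivePlane Finset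

variable {P L : Type} [Membership P L] [Fintype P] {K : Set P} {d : ℕ}

theorem ncard_inter_eq_card_filter (K : Set P) (l : L) :
    {p : P | p ∈ K ∧ p ∈ l}.ncard = #{p ∈ K.toFinset | p ∈ l} := by
  rw [← Set.ncard_coe_finset]
  congr
  ext p
  simp

namespace IsMaximalArc

theorem card_inter_eq_of_mem (hK : IsMaximalArc P L K d) {y : P} (hy : y ∈ K) {l : L}
    (hyl : y ∈ l) : #{p ∈ K.toFinset | p ∈ l} = d := by
  have hpos : 0 < #{p ∈ K.toFinset | p ∈ l} := card_pos.mpr ⟨y, by simp [hy, hyl]⟩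
  rcases hK.2.2 l with h | h <;> rw [ncard_inter_eq_card_filter] at h <;> omega

theorem ncard_add_order [Fintype L] [ProjectivePlane P L] (hK : IsMaximalArc P L K d) {y : P}
    (hy : y ∈ K) : K.ncard + order P L = (order P L + 1) * d := by
  rw [Set.ncard_eq_toFinset_card', ← sum_pencil_eq_card_add_order _ (Set.mem_toFinset.mpr hy),
    sum_congr rfl fun l hl => hK.card_inter_eq_of_mem hy (mem_pencil.mp hl), sum_const,
    card_pencil, smul_eq_mul]

theorem dvd_ncard [Fintype L] [HasLines P L] (hK : IsMaximalArc P L K d) {x : P} (hx : x ∉ K) :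
    d ∣ K.ncard := by
  rw [Set.ncard_eq_toFinset_card', card_eq_sum_pencil_of_notMem (L := L) _ (by simpa using hx)]
  refine dvd_sum fun l _ => ?_
  rcases hK.2.2 l with h | h <;> rw [ncard_inter_eq_card_filter] at h <;> simp [h]

end IsMaximalArc

end MaxArcPlane

/-- if a finite projective plane of order `q` contains a maximal arc of
degree `d`, then `d` divides `q`. -/
theorem statement18 {P L : Type} [Membership P L] [Fintype P] [Fintype L]
    [Configuration.ProjectivePlane P L]
    (K : Set P) (d : ℕ) (hK : MaxArcPlane.IsMaximalArc P L K d) :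
    d ∣ Configuration.ProjectivePlane.order P L := by
  obtain ⟨y, hy⟩ := hK.1
  obtain ⟨x, hx⟩ := (Set.ne_univ_iff_exists_notMem K).mp hK.2.1
  have hd_dvd : d ∣ K.ncard + Configuration.ProjectivePlane.order P L := by
    rw [hK.ncard_add_order hy]
    exact dvd_mul_left d _
  exact (Nat.dvd_add_right (hK.dvd_ncard hx)).mp hd_dvd
end
end
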